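/- Let C be a chain complex over ℤ with differential d and let p be a prime and r ≥ 1. Define inductively: an element a ∈ C 'survives to E^r with Bockstein image b' if there exist c, e ∈ C such that d(a + p·c) = p^r·(b + p·e). Prove the inductive step: if a survives to E^{k-1} with Bockstein image 0 modulo the relation (i.e. d(a + p·f) = p^k·g for some f, g), and g is equivalent to b at stage k in the sense that g - b is, modulo p-divisibility, a Bockstein image at stage k-1 (i.e. there exist y, z, e ∈ C with d(y + p·z) = p^{k-1}·(g - b - p·e)), then there exists c ∈ C with d(a + p·c) = p^k·(b + p·e). -/
import Mathlib


/-- inductive step of Lemma 2.3 (lem:bss-rep).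
`C` a chain complex over `ℤ`, `p` a prime, `k ≥ 2`.  If `d (a + p•f) = p^k • g`
(i.e. `a` survives to `E^{k-1}` with vanishing Bockstein) and `g - b` is,
modulo `p`-divisibility, a Bockstein image at stage `k-1`
(`d (y + p•z) = p^{k-1} • (g - b - p•e)`), then there is `c` with
`d (a + p•c) = p^k • (b + p•e)`. -/
theorem stmt_1 {C : Type*} [AddCommGroup C] [Module ℤ C]
    (d : C →ₗ[ℤ] C) (hd : d ∘ₗ d = 0) (p : ℕ) (hp : p.Prime)
    (k : ℕ) (hk : 2 ≤ k) (a b f g y z e : C)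
    (h1 : d (a + (p : ℤ) • f) = ((p : ℤ) ^ k) • g)
    (h2 : d (y + (p : ℤ) • z) = ((p : ℤ) ^ (k - 1)) • (g - b - (p : ℤ) • e)) :
    ∃ c : C, d (a + (p : ℤ) • c) = ((p : ℤ) ^ k) • (b + (p : ℤ) • e) := by
  obtain ⟨m, rfl⟩ : ∃ m, k = m + 2 := ⟨k - 2, by omega⟩
  have hsub : m + 2 - 1 = m + 1 := by omega
  rw [hsub] at h2
  refine ⟨f - (y + (p : ℤ) • z), ?_⟩
  rw [zsmul_sub, ← add_sub_assoc, map_sub, map_zsmul, h1, h2, ← mul_zsmul,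
    ← pow_succ', ← zsmul_sub, sub_sub, sub_sub_cancel]
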